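/- Let X be a Kaplansky–Hilbert module over L^0 and D ⊆ X a (bo)-dense submodule. The set L⁺(D) of all L^0-linear operators a on X with aD ⊆ D, D ⊆ D(a*), and a*D ⊆ D, equipped with a⁺ = a*|D, is an O*-algebra over L^0 with domain D; that is, it is closed under addition, L^0-scalar multiplication, composition, and the involution a ↦ a⁺, contains the identity on D, and every element is (bo)-closable. -/

import Mathlib

open MeasureTheory

namespace KHPaper

variable {Ω : Type} [MeasurableSpace Ω] {μ : Measure Ω}

/-- `L⁰(Ω)`: measurable complex functions modulo a.e. equality. -/
abbrev L0 (Ω : Type) [MeasurableSpace Ω] (μ : Measure Ω) := Ω →ₘ[μ] ℂ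
/-- real-valued `L⁰`. -/
abbrev L0R (Ω : Type) [MeasurableSpace Ω] (μ : Measure Ω) := Ω →ₘ[μ] ℝ

noncomputable instance : CommRing (L0 Ω μ) :=
  { (inferInstance : AddCommGroup (L0 Ω μ)),
    (inferInstance : CommMonoid (L0 Ω μ)) with
    left_distrib := by
      intro a b c
      apply AEEqFun.ext
      filter_upwards [AEEqFun.coeFn_mul a (b + c), AEEqFun.coeFn_add b c,
        AEEqFun.coeFn_mul a b, AEEqFun.coeFn_mul a c,
        AEEqFun.coeFn_add (a * b) (a * c)] with x h1 h2 h3 h4 h5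
      simp only [h1, h5, Pi.mul_apply, Pi.add_apply, h2, h3, h4, mul_add]
    right_distrib := by
      intro a b c
      apply AEEqFun.ext
      filter_upwards [AEEqFun.coeFn_mul (a + b) c, AEEqFun.coeFn_add a b,
        AEEqFun.coeFn_mul a c, AEEqFun.coeFn_mul b c,
        AEEqFun.coeFn_add (a * c) (b * c)] with x h1 h2 h3 h4 h5
      simp only [h1, h5, Pi.mul_apply, Pi.add_apply, h2, h3, h4, add_mul]
    zero_mul := by
      intro a
      apply AEEqFun.ext
      filter_upwards [AEEqFun.coeFn_mul 0 a, AEEqFun.coeFn_zero (β := ℂ) (μ := μ)] with x h1 h2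
      simp [h1, h2]
    mul_zero := by
      intro a
      apply AEEqFun.ext
      filter_upwards [AEEqFun.coeFn_mul a 0, AEEqFun.coeFn_zero (β := ℂ) (μ := μ)] with x h1 h2
      simp [h1, h2] }

/-- pointwise absolute value `L⁰ → L⁰ℝ`. -/
noncomputable def absL (f : L0 Ω μ) : L0R Ω μ := f.comp (fun z : ℂ => ‖z‖) continuous_norm
/-- pointwise real part. -/
noncomputable def reL (f : L0 Ω μ) : L0R Ω μ := f.comp Complex.re Complex.continuous_re
/-- pointwise complex conjugation. -/
noncomputable def conjL (f : L0 Ω μ) : L0 Ω μ :=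
  f.comp (starRingEnd ℂ) (by continuity)
/-- embedding of real `L⁰` into complex `L⁰`. -/
noncomputable def ofRealL (f : L0R Ω μ) : L0 Ω μ := f.comp Complex.ofReal Complex.continuous_ofReal
/-- pointwise square root on real `L⁰`. -/
noncomputable def sqrtL (f : L0R Ω μ) : L0R Ω μ := f.comp Real.sqrt Real.continuous_sqrt
/-- constants. -/
noncomputable def constL (Ω : Type) [MeasurableSpace Ω] (μ : Measure Ω) (c : ℂ) : L0 Ω μ :=
  AEEqFun.const Ω c

/-- idempotents of `L⁰` (the Boolean algebra `∇`). -/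
def IsIdem (π : L0 Ω μ) : Prop := π * π = π

/-- A family of idempotents is a partition of the unit in `∇`. -/
def IsPartition {ι : Type*} (π : ι → L0 Ω μ) : Prop :=
  (∀ i, IsIdem (π i)) ∧ (∀ i j, i ≠ j → π i * π j = 0) ∧
    (∀ e : L0 Ω μ, IsIdem e → (∀ i, π i * e = 0) → e = 0)

/-- a decreasing net of nonnegative elements of `L⁰ℝ` has infimum zero. -/
def InfZero {ι : Type*} (e : ι → L0R Ω μ) : Prop :=
  (∀ i, 0 ≤ e i) ∧ ∀ g : L0R Ω μ, (∀ i, g ≤ e i) → g ≤ 0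

/-- `(o)`-convergence of a net in `L⁰ℝ`. -/
def OConv {ι : Type*} [Preorder ι] (f : ι → L0R Ω μ) (l : L0R Ω μ) : Prop :=
  ∃ e : ι → L0R Ω μ, Antitone e ∧ InfZero e ∧ ∀ i, |f i - l| ≤ e i

/-- `(o)`-summability of a family in `L⁰ℝ` (order convergence of the net of partial sums). -/
def OSummable {ι : Type*} (g : ι → L0R Ω μ) : Prop :=
  ∃ s : L0R Ω μ, OConv (fun F : Finset ι => ∑ i ∈ F, g i) s

section LNS

variable {X : Type*} [AddCommGroup X]

/-- An `L⁰`-valued norm making `X` a lattice-normed space over `L⁰` (complex vector space case). -/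
structure LNSNorm (Ω : Type) [MeasurableSpace Ω] (μ : Measure Ω)
    (X : Type*) [AddCommGroup X] [Module ℂ X] where
  nrm : X → L0R Ω μ
  nrm_nonneg : ∀ x, 0 ≤ nrm x
  nrm_eq_zero : ∀ x, nrm x = 0 ↔ x = 0
  nrm_smul : ∀ (c : ℂ) (x : X), nrm (c • x) = ‖c‖ • nrm x
  nrm_triangle : ∀ x y, nrm (x + y) ≤ nrm x + nrm y

variable [Module ℂ X]

/-- `d`-decomposability (Kantorovich norm). -/
def LNSNorm.DDecomp (N : LNSNorm Ω μ X) : Prop :=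
  ∀ (x : X) (e₁ e₂ : L0R Ω μ), 0 ≤ e₁ → 0 ≤ e₂ → e₁ ⊓ e₂ = 0 → N.nrm x = e₁ + e₂ →
    ∃ x₁ x₂ : X, x = x₁ + x₂ ∧ N.nrm x₁ = e₁ ∧ N.nrm x₂ = e₂

/-- `(bo)`-convergence of a net in `X`. -/
def LNSNorm.BOConv (N : LNSNorm Ω μ X) {ι : Type*} [Preorder ι] (f : ι → X) (l : X) : Prop :=
  OConv (fun i => N.nrm (f i - l)) 0

/-- `(bo)`-Cauchy nets. -/
def LNSNorm.BOCauchy (N : LNSNorm Ω μ X) {ι : Type*} [Preorder ι] (f : ι → X) : Prop :=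
  ∃ e : ι → L0R Ω μ, Antitone e ∧ InfZero e ∧
    ∀ i j k, k ≤ i → k ≤ j → N.nrm (f i - f j) ≤ e k

/-- `(bo)`-completeness. -/
def LNSNorm.BOComplete (N : LNSNorm Ω μ X) : Prop :=
  ∀ (ι : Type) (_ : Nonempty ι) (_ : SemilatticeSup ι) (f : ι → X),
    N.BOCauchy f → ∃ l : X, N.BOConv f l

end LNS

section Norms
variable {X : Type*} [AddCommGroup X]
def DDecompN (nrm : X → L0R Ω μ) : Prop :=
  ∀ (x : X) (e₁ e₂ : L0R Ω μ), 0 ≤ e₁ → 0 ≤ e₂ → e₁ ⊓ e₂ = 0 → nrm x = e₁ + e₂ →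
    ∃ x₁ x₂ : X, x = x₁ + x₂ ∧ nrm x₁ = e₁ ∧ nrm x₂ = e₂
def BOConvN (nrm : X → L0R Ω μ) {ι : Type*} [Preorder ι] (f : ι → X) (l : X) : Prop :=
  OConv (fun i => nrm (f i - l)) 0
def BOCauchyN (nrm : X → L0R Ω μ) {ι : Type*} [Preorder ι] (f : ι → X) : Prop :=
  ∃ e : ι → L0R Ω μ, Antitone e ∧ InfZero e ∧
    ∀ i j k, k ≤ i → k ≤ j → nrm (f i - f j) ≤ e k
def BOCompleteN (nrm : X → L0R Ω μ) : Prop :=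
  ∀ (ι : Type) (_ : Nonempty ι) (_ : SemilatticeSup ι) (f : ι → X),
    BOCauchyN nrm f → ∃ l : X, BOConvN nrm f l
def BODenseN (nrm : X → L0R Ω μ) (D : Set X) : Prop :=
  ∀ x : X, ∃ (ι : Type) (_ : Nonempty ι) (_ : SemilatticeSup ι) (f : ι → X),
    (∀ i, f i ∈ D) ∧ BOConvN nrm f x
end Norms

/-- An `L⁰`-valued inner product on an `L⁰`-module. -/
structure KHInner (Ω : Type) [MeasurableSpace Ω] (μ : Measure Ω)
    (X : Type*) [AddCommGroup X] [Module (L0 Ω μ) X] where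
  inner : X → X → L0 Ω μ
  add_left : ∀ x y z, inner (x + y) z = inner x z + inner y z
  smul_left : ∀ (c : L0 Ω μ) (x y : X), inner (c • x) y = c * inner x y
  conj_symm : ∀ x y, inner x y = conjL (inner y x)
  self_real : ∀ x, inner x x = ofRealL (reL (inner x x))
  self_nonneg : ∀ x, 0 ≤ reL (inner x x)
  definite : ∀ x, inner x x = 0 → x = 0

section KH
variable {X : Type*} [AddCommGroup X] [Module (L0 Ω μ) X]
noncomputable def KHInner.knorm (K : KHInner Ω μ X) (x : X) : L0R Ω μ :=
  sqrtL (reL (K.inner x x))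
/-- `X` is a Kaplansky-Hilbert module: the induced norm is d-decomposable and (bo)-complete. -/
def KHInner.IsKH (K : KHInner Ω μ X) : Prop := DDecompN K.knorm ∧ BOCompleteN K.knorm

variable (K : KHInner Ω μ X) (D : Submodule (L0 Ω μ) X)
/-- operators with domain `D` mapping into `D`. -/
def MapsD (a : D →ₗ[L0 Ω μ] X) : Prop := ∀ φ : D, a φ ∈ D
def IsAdjAt (a : D →ₗ[L0 Ω μ] X) (ψ χ : X) : Prop :=
  ∀ φ : D, K.inner (a φ) ψ = K.inner (φ : X) χ
def AdjDomain (a : D →ₗ[L0 Ω μ] X) : Set X := {ψ | ∃ χ, IsAdjAt K D a ψ χ}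
/-- `L⁺(D)`. -/
def LPlus : Set (D →ₗ[L0 Ω μ] X) :=
  {a | MapsD D a ∧ (D : Set X) ⊆ AdjDomain K D a ∧
       ∀ ψ ∈ D, ∃ χ ∈ D, IsAdjAt K D a ψ χ}
def BOClosableOp (a : D →ₗ[L0 Ω μ] X) : Prop :=
  ∀ (ι : Type) (_ : Nonempty ι) (_ : SemilatticeSup ι) (f : ι → D) (y : X),
    BOConvN K.knorm (fun i => (f i : X)) 0 → BOConvN K.knorm (fun i => a (f i)) y → y = 0
/-- composition `a ∘ b` of operators on `D`, when `b` maps into `D`. -/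
noncomputable def compD (a b : D →ₗ[L0 Ω μ] X) (hb : MapsD D b) : D →ₗ[L0 Ω μ] X :=
  a.comp (LinearMap.codRestrict D b hb)

/-- endomorphism version: an operator on `D` having an adjoint with domain `⊇ D` and values in `D`. -/
def HasAdjE (a : Module.End (L0 Ω μ) D) : Prop :=
  ∀ ψ : D, ∃ χ : D, ∀ φ : D, K.inner (a φ : X) (ψ : X) = K.inner (φ : X) (χ : X)
/-- `L⁺(D)` realized inside `End(D)`. -/
def LPlusE : Set (Module.End (L0 Ω μ) D) := {a | HasAdjE K D a}
def IsAdjPairE (a b : Module.End (L0 Ω μ) D) : Prop :=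
  ∀ φ ψ : D, K.inner (a φ : X) (ψ : X) = K.inner (φ : X) (b ψ : X)
/-- the rank one operator `φ ⊗ ψ` on `D`. -/
noncomputable def rankOneE (φ ψ : D) : Module.End (L0 Ω μ) D where
  toFun η := K.inner (η : X) (ψ : X) • φ
  map_add' a b := by
    show K.inner (↑(a + b)) _ • φ = _
    rw [Submodule.coe_add, K.add_left]
    exact add_smul _ _ φ
  map_smul' c a := by
    show K.inner (↑(c • a)) _ • φ = _
    rw [Submodule.coe_smul, K.smul_left, RingHom.id_apply]
    exact mul_smul c _ φ
end KH

section Ops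
variable {M : Type*} [AddCommGroup M] [Module (L0 Ω μ) M]
/-- finite-generated operator: its range is a finite-generated submodule. -/
def FinGenOp (a : Module.End (L0 Ω μ) M) : Prop :=
  ∃ (n : ℕ) (g : Fin n → M), ∀ x : M, ∃ c : Fin n → L0 Ω μ, a x = ∑ i, c i • g i
def IsSubalgebraSet (U : Set (Module.End (L0 Ω μ) M)) : Prop :=
  (∀ a ∈ U, ∀ b ∈ U, a + b ∈ U) ∧ (∀ (c : L0 Ω μ), ∀ a ∈ U, c • a ∈ U) ∧
    (∀ a ∈ U, ∀ b ∈ U, a * b ∈ U)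
/-- standard algebras of operators: subalgebras containing all finite-generated operators. -/
def IsStandard (U : Set (Module.End (L0 Ω μ) M)) : Prop :=
  IsSubalgebraSet U ∧ ∀ a, FinGenOp a → a ∈ U
/-- the operator `a` is homogeneous of type one: `d(π ⬝ a(M)) = 1` for every nonzero idempotent. -/
def HomogOneOp (a : Module.End (L0 Ω μ) M) : Prop :=
  ∀ π : L0 Ω μ, IsIdem π → π ≠ 0 →
    (∃ g ∈ Set.range a, ∀ x ∈ Set.range a, ∃ c : L0 Ω μ, π • x = c • (π • g)) ∧
    ∃ x ∈ Set.range a, π • x ≠ 0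
end Ops

section DirectSum
variable {I : Type} [DecidableEq I] {X : I → Type*}
  [∀ i, AddCommGroup (X i)] [∀ i, Module (L0 Ω μ) (X i)]
  (K : ∀ i, KHInner Ω μ (X i)) (D : ∀ i, Submodule (L0 Ω μ) (X i))

/-- `D_I`: the submodule of the direct sum consisting of finitely supported tuples. -/
abbrev DI (D : ∀ i, Submodule (L0 Ω μ) (X i)) := Π₀ i, ↥(D i)

/-- the inner product of `X_I` restricted to `D_I`. -/
noncomputable def innerDI (φ ψ : DI D) : L0 Ω μ :=
  letI : ∀ (i : I) (x : ↥(D i)), Decidable (x ≠ 0) := fun _ x => Classical.dec _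
  φ.sum fun i x => (K i).inner (x : X i) ((ψ i : X i))

/-- the canonical copy of an operator on `D i` acting on `D_I`. -/
noncomputable def coordOp (i : I) (b : Module.End (L0 Ω μ) ↥(D i)) :
    Module.End (L0 Ω μ) (DI D) :=
  (DFinsupp.lsingle (R := L0 Ω μ) i).comp (b.comp (DFinsupp.lapply (R := L0 Ω μ) i))

/-- the canonical copy of the rank one operator `φ ⊗ φ`, `φ ∈ D i`, on `D_I`. -/
noncomputable def coordRankOne (i : I) (φ : ↥(D i)) : Module.End (L0 Ω μ) (DI D) :=
  coordOp D i (rankOneE (K i) (D i) φ φ)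

/-- coordinatewise operators `(a_i)` with each `a_i ∈ L⁺(D_i)`: the algebra `L⁺(D_i : i ∈ I)`. -/
def CoordLPlus : Set (Module.End (L0 Ω μ) (DI D)) :=
  {a | ∃ f : ∀ i, Module.End (L0 Ω μ) ↥(D i),
    (∀ i, HasAdjE (K i) (D i) (f i)) ∧ ∀ (φ : DI D) (i : I), a φ i = f i (φ i)}

/-- adjoint pairs on `D_I`. -/
def IsAdjPairDI (a b : Module.End (L0 Ω μ) (DI D)) : Prop :=
  ∀ φ ψ : DI D, innerDI K D (a φ) ψ = innerDI K D φ (b ψ)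

/-- the maximal `O*`-algebra `L⁺(D_I)`. -/
def LPlusDI : Set (Module.End (L0 Ω μ) (DI D)) :=
  {a | ∃ b, IsAdjPairDI K D a b}

/-- `*`-subalgebras of operators on `D_I`. -/
def IsStarSubalgDI (A : Set (Module.End (L0 Ω μ) (DI D))) : Prop :=
  IsSubalgebraSet A ∧ ∀ a ∈ A, ∃ b ∈ A, IsAdjPairDI K D a b

/-- projections on `D_I`: idempotent and self-adjoint. -/
def IsProjDI (p : Module.End (L0 Ω μ) (DI D)) : Prop :=
  p * p = p ∧ IsAdjPairDI K D p p

/-- the range of `p` is concentrated on a single coordinate. -/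
def SingleCoordRange (p : Module.End (L0 Ω μ) (DI D)) : Prop :=
  ∃ i : I, ∀ (φ : DI D) (j : I), j ≠ i → p φ j = 0

/-- `M(A)`: rank one projections in `A` whose range generators have a unique
nonzero coordinate. -/
def MSet (A : Set (Module.End (L0 Ω μ) (DI D))) :
    Set (Module.End (L0 Ω μ) (DI D)) :=
  {p | p ∈ A ∧ IsProjDI K D p ∧ HomogOneOp p ∧ SingleCoordRange D p}

end DirectSum
/-- A Banach–Kantorovich space over `L⁰` with its `L⁰`-module structure. -/
structure BKSpace (Ω : Type) [MeasurableSpace Ω] (μ : Measure Ω)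
    (X : Type*) [AddCommGroup X] [Module (L0 Ω μ) X] where
  nrm : X → L0R Ω μ
  nrm_nonneg : ∀ x, 0 ≤ nrm x
  nrm_eq_zero : ∀ x, nrm x = 0 ↔ x = 0
  nrm_smul : ∀ (c : L0 Ω μ) (x : X), nrm (c • x) = absL c * nrm x
  nrm_triangle : ∀ x y, nrm (x + y) ≤ nrm x + nrm y
  ddecomp : DDecompN nrm
  complete : BOCompleteN nrm

/-! The algebraic closure properties of `L⁺(D)` are formal: adjoints of sums, scalar multiples
and products are the corresponding combinations of adjoints, and an adjoint vector lying in `D`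
is unique because a vector of `D` orthogonal to `D` is orthogonal to itself. For
(bo)-closability, if `fᵢ → 0` and `a fᵢ → y`, then `⟨y, ψ⟩ = lim ⟨fᵢ, a⁺ψ⟩ = 0` for `ψ ∈ D`,
so `y ⊥ D` and (bo)-density gives `y = 0`. The limits are controlled by the `L⁰`-valued
Cauchy–Schwarz inequality, which holds almost everywhere because `⟨c₁x + c₂y, c₁x + c₂y⟩ ≥ 0`
for the three coefficient pairs `(⟨y,y⟩, -⟨x,y⟩)`, `(-⟨y,x⟩, ⟨x,x⟩)` and `(1, -⟨x,y⟩)`. -/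

section PointwiseL0

lemma conjL_coe (f : L0 Ω μ) : ⇑(conjL f) =ᵐ[μ] fun ω => (starRingEnd ℂ) (f ω) :=
  AEEqFun.coeFn_comp _ _ f

lemma reL_coe (f : L0 Ω μ) : ⇑(reL f) =ᵐ[μ] fun ω => (f ω).re :=
  AEEqFun.coeFn_comp _ _ f

lemma absL_coe (f : L0 Ω μ) : ⇑(absL f) =ᵐ[μ] fun ω => ‖f ω‖ :=
  AEEqFun.coeFn_comp _ _ f

lemma sqrtL_coe (f : L0R Ω μ) : ⇑(sqrtL f) =ᵐ[μ] fun ω => Real.sqrt (f ω) :=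
  AEEqFun.coeFn_comp _ _ f

lemma ofRealL_coe (f : L0R Ω μ) : ⇑(ofRealL f) =ᵐ[μ] fun ω => ((f ω : ℝ) : ℂ) :=
  AEEqFun.coeFn_comp _ _ f

lemma conjL_add (f g : L0 Ω μ) : conjL (f + g) = conjL f + conjL g := by
  apply AEEqFun.ext
  filter_upwards [conjL_coe (f + g), AEEqFun.coeFn_add f g,
    AEEqFun.coeFn_add (conjL f) (conjL g), conjL_coe f, conjL_coe g] with ω h₁ h₂ h₃ h₄ h₅
  simp only [h₁, h₂, h₃, h₄, h₅, Pi.add_apply, map_add]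

lemma conjL_sub (f g : L0 Ω μ) : conjL (f - g) = conjL f - conjL g := by
  apply AEEqFun.ext
  filter_upwards [conjL_coe (f - g), AEEqFun.coeFn_sub f g,
    AEEqFun.coeFn_sub (conjL f) (conjL g), conjL_coe f, conjL_coe g] with ω h₁ h₂ h₃ h₄ h₅
  simp only [h₁, h₂, h₃, h₄, h₅, Pi.sub_apply, map_sub]

lemma conjL_mul (f g : L0 Ω μ) : conjL (f * g) = conjL f * conjL g := by
  apply AEEqFun.ext
  filter_upwards [conjL_coe (f * g), AEEqFun.coeFn_mul f g,
    AEEqFun.coeFn_mul (conjL f) (conjL g), conjL_coe f, conjL_coe g] with ω h₁ h₂ h₃ h₄ h₅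
  simp only [h₁, h₂, h₃, h₄, h₅, Pi.mul_apply, map_mul]

lemma conjL_conjL (f : L0 Ω μ) : conjL (conjL f) = f := by
  apply AEEqFun.ext
  filter_upwards [conjL_coe (conjL f), conjL_coe f] with ω h₁ h₂
  simp only [h₁, h₂, Complex.conj_conj]

lemma eq_zero_of_absL_nonpos {f : L0 Ω μ} (h : absL f ≤ 0) : f = 0 := by
  apply AEEqFun.ext
  filter_upwards [AEEqFun.coeFn_le.2 h, absL_coe f, AEEqFun.coeFn_zero (β := ℝ) (μ := μ),
    AEEqFun.coeFn_zero (β := ℂ) (μ := μ)] with ω h₁ h₂ h₃ h₄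
  rw [h₂, h₃] at h₁
  rw [h₄]
  exact norm_le_zero_iff.1 h₁

lemma absL_add_le (f g : L0 Ω μ) : absL (f + g) ≤ absL f + absL g := by
  rw [← AEEqFun.coeFn_le]
  filter_upwards [absL_coe (f + g), AEEqFun.coeFn_add f g,
    AEEqFun.coeFn_add (absL f) (absL g), absL_coe f, absL_coe g] with ω h₁ h₂ h₃ h₄ h₅
  simp only [h₁, h₂, h₃, h₄, h₅, Pi.add_apply]
  exact norm_add_le _ _

lemma L0R.add_le_add {a b c d : L0R Ω μ} (hab : a ≤ b) (hcd : c ≤ d) : a + c ≤ b + d := by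
  rw [← AEEqFun.coeFn_le]
  filter_upwards [AEEqFun.coeFn_le.2 hab, AEEqFun.coeFn_le.2 hcd,
    AEEqFun.coeFn_add a c, AEEqFun.coeFn_add b d] with ω h₁ h₂ h₃ h₄
  rw [h₃, h₄, Pi.add_apply, Pi.add_apply]
  exact _root_.add_le_add h₁ h₂

lemma L0R.mul_le_mul_of_nonneg_left {a b c : L0R Ω μ} (hab : a ≤ b) (hc : 0 ≤ c) :
    c * a ≤ c * b := by
  rw [← AEEqFun.coeFn_le]
  filter_upwards [AEEqFun.coeFn_le.2 hab, AEEqFun.coeFn_le.2 hc, AEEqFun.coeFn_mul c a,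
    AEEqFun.coeFn_mul c b, AEEqFun.coeFn_zero (β := ℝ) (μ := μ)] with ω h₁ h₂ h₃ h₄ h₅
  rw [h₅] at h₂
  rw [h₃, h₄, Pi.mul_apply, Pi.mul_apply]
  exact _root_.mul_le_mul_of_nonneg_left h₁ h₂

end PointwiseL0

section OrderConvergence

variable {ι : Type*}

/-- Dividing by `|c| + 1` turns `g - d ≤ c * e i` into `(g - d) / (|c| + 1) ≤ e i`. -/
lemma le_of_forall_le_mul_add {e : ι → L0R Ω μ} (he : InfZero e) {c d g : L0R Ω μ}
    (hc : 0 ≤ c) (h : ∀ i, g ≤ c * e i + d) : g ≤ d := by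
  have hw : Continuous fun r : ℝ => (|r| + 1)⁻¹ :=
    (continuous_abs.add continuous_const).inv₀ fun r => (by positivity : (0 : ℝ) < |r| + 1).ne'
  obtain ⟨w, hwc⟩ : ∃ w : L0R Ω μ, ⇑w =ᵐ[μ] fun ω => (|c ω| + 1)⁻¹ :=
    ⟨c.comp _ hw, AEEqFun.coeFn_comp _ hw c⟩
  have hq : ∀ i, (g - d) * w ≤ e i := by
    intro i
    rw [← AEEqFun.coeFn_le]
    filter_upwards [AEEqFun.coeFn_le.2 (h i), AEEqFun.coeFn_le.2 hc, AEEqFun.coeFn_le.2 (he.1 i),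
      AEEqFun.coeFn_mul (g - d) w, AEEqFun.coeFn_sub g d, hwc,
      AEEqFun.coeFn_add (c * e i) d, AEEqFun.coeFn_mul c (e i),
      AEEqFun.coeFn_zero (β := ℝ) (μ := μ)] with ω h₁ h₂ h₃ h₄ h₅ h₆ h₇ h₈ h₉
    simp only [h₄, h₅, h₆, h₇, h₈, h₉, Pi.mul_apply, Pi.sub_apply, Pi.add_apply,
      Pi.zero_apply] at h₁ h₂ h₃ ⊢
    rw [abs_of_nonneg h₂, mul_inv_le_iff₀ (by positivity)]
    nlinarith
  rw [← AEEqFun.coeFn_le]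
  filter_upwards [AEEqFun.coeFn_le.2 (he.2 _ hq), AEEqFun.coeFn_mul (g - d) w,
    AEEqFun.coeFn_sub g d, hwc, AEEqFun.coeFn_zero (β := ℝ) (μ := μ)] with ω h₁ h₂ h₃ h₄ h₅
  simp only [h₂, h₃, h₄, h₅, Pi.mul_apply, Pi.sub_apply, Pi.zero_apply] at h₁
  rw [mul_inv_le_iff₀ (by positivity), zero_mul] at h₁
  linarith

lemma nonpos_of_forall_le_mul_add_mul [SemilatticeSup ι] {e e' : ι → L0R Ω μ}
    (he : Antitone e) (hin : InfZero e) (he' : Antitone e') (hin' : InfZero e')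
    {c c' g : L0R Ω μ} (hc : 0 ≤ c) (hc' : 0 ≤ c') (h : ∀ i, g ≤ c * e i + c' * e' i) :
    g ≤ 0 := by
  have hj : ∀ j, g ≤ c' * e' j + 0 := fun j => by
    rw [add_zero]
    refine le_of_forall_le_mul_add hin hc fun i => (h (i ⊔ j)).trans ?_
    exact L0R.add_le_add (L0R.mul_le_mul_of_nonneg_left (he le_sup_left) hc)
      (L0R.mul_le_mul_of_nonneg_left (he' le_sup_right) hc')
  exact le_of_forall_le_mul_add hin' hc' hj

lemma BOConvN.exists_bound {X : Type*} [AddCommGroup X] {nrm : X → L0R Ω μ} [Preorder ι]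
    {f : ι → X} {l : X} (h : BOConvN nrm f l) :
    ∃ e : ι → L0R Ω μ, Antitone e ∧ InfZero e ∧ ∀ i, nrm (f i - l) ≤ e i := by
  obtain ⟨e, he, hin, hb⟩ := h
  exact ⟨e, he, hin, fun i => (le_abs_self _).trans (by simpa only [sub_zero] using hb i)⟩

end OrderConvergence

lemma norm_le_sqrt_mul_sqrt_of_combinations_nonneg {A B : ℝ} {t : ℂ} (hA : 0 ≤ A) (hB : 0 ≤ B)
    (h₁ : 0 ≤ B * (A * B - Complex.normSq t)) (h₂ : 0 ≤ A * (A * B - Complex.normSq t))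
    (h₃ : 0 ≤ A - 2 * Complex.normSq t + Complex.normSq t * B) :
    ‖t‖ ≤ Real.sqrt A * Real.sqrt B := by
  have hN : Complex.normSq t ≤ A * B := by
    rcases hB.eq_or_lt with rfl | hB'
    · rcases hA.eq_or_lt with rfl | hA'
      · nlinarith [Complex.normSq_nonneg t]
      · nlinarith
    · nlinarith
  rw [Complex.norm_def, ← Real.sqrt_mul hA]
  exact Real.sqrt_le_sqrt hN

namespace KHInner

variable {X : Type*} [AddCommGroup X] [Module (L0 Ω μ) X] (K : KHInner Ω μ X)

lemma inner_add_right (x y z : X) : K.inner x (y + z) = K.inner x y + K.inner x z := by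
  rw [K.conj_symm x (y + z), K.add_left, conjL_add, ← K.conj_symm x y, ← K.conj_symm x z]

lemma inner_smul_right (c : L0 Ω μ) (x y : X) :
    K.inner x (c • y) = conjL c * K.inner x y := by
  rw [K.conj_symm x (c • y), K.smul_left, conjL_mul, ← K.conj_symm x y]

lemma inner_sub_left (x y z : X) : K.inner (x - y) z = K.inner x z - K.inner y z :=
  eq_sub_of_add_eq (by rw [← K.add_left, sub_add_cancel])

lemma inner_sub_right (x y z : X) : K.inner x (y - z) = K.inner x y - K.inner x z := by
  rw [K.conj_symm x (y - z), K.inner_sub_left, conjL_sub, ← K.conj_symm x y, ← K.conj_symm x z]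

lemma knorm_coe (x : X) :
    ⇑(K.knorm x) =ᵐ[μ] fun ω => Real.sqrt ((reL (K.inner x x)) ω) :=
  sqrtL_coe _

lemma knorm_nonneg (x : X) : 0 ≤ K.knorm x := by
  rw [← AEEqFun.coeFn_le]
  filter_upwards [K.knorm_coe x, AEEqFun.coeFn_zero (β := ℝ) (μ := μ)] with ω h₁ h₂
  rw [h₁, h₂]
  exact Real.sqrt_nonneg _

lemma knorm_sub_comm (x y : X) : K.knorm (x - y) = K.knorm (y - x) := by
  have h : K.inner (x - y) (x - y) = K.inner (y - x) (y - x) := by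
    simp only [inner_sub_left, inner_sub_right]
    ring
  rw [knorm, knorm, h]

lemma inner_self_coe (x : X) :
    ⇑(K.inner x x) =ᵐ[μ] fun ω => (((reL (K.inner x x)) ω : ℝ) : ℂ) := by
  conv_lhs => rw [K.self_real x]
  exact ofRealL_coe _

lemma inner_swap_coe (x y : X) :
    ⇑(K.inner y x) =ᵐ[μ] fun ω => (starRingEnd ℂ) (K.inner x y ω) := by
  conv_lhs => rw [K.conj_symm y x]
  exact conjL_coe _

lemma re_inner_combination_nonneg (c₁ c₂ : L0 Ω μ) (x y : X) :
    ∀ᵐ ω ∂μ, 0 ≤ (c₁ ω * ((starRingEnd ℂ) (c₁ ω) * K.inner x x ω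
      + (starRingEnd ℂ) (c₂ ω) * K.inner x y ω)
      + c₂ ω * ((starRingEnd ℂ) (c₁ ω) * K.inner y x ω
      + (starRingEnd ℂ) (c₂ ω) * K.inner y y ω)).re := by
  set u := c₁ • x + c₂ • y
  have hu : K.inner u u = c₁ * (conjL c₁ * K.inner x x + conjL c₂ * K.inner x y)
      + c₂ * (conjL c₁ * K.inner y x + conjL c₂ * K.inner y y) := by
    simp only [u, K.add_left, K.smul_left, inner_add_right, inner_smul_right]
  have h₀ := K.self_nonneg u
  rw [hu] at h₀
  filter_upwards [AEEqFun.coeFn_le.2 h₀, reL_coe _, AEEqFun.coeFn_zero (β := ℝ) (μ := μ),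
    AEEqFun.coeFn_add (c₁ * (conjL c₁ * K.inner x x + conjL c₂ * K.inner x y))
      (c₂ * (conjL c₁ * K.inner y x + conjL c₂ * K.inner y y)),
    AEEqFun.coeFn_mul c₁ (conjL c₁ * K.inner x x + conjL c₂ * K.inner x y),
    AEEqFun.coeFn_mul c₂ (conjL c₁ * K.inner y x + conjL c₂ * K.inner y y),
    AEEqFun.coeFn_add (conjL c₁ * K.inner x x) (conjL c₂ * K.inner x y),
    AEEqFun.coeFn_add (conjL c₁ * K.inner y x) (conjL c₂ * K.inner y y),
    AEEqFun.coeFn_mul (conjL c₁) (K.inner x x), AEEqFun.coeFn_mul (conjL c₂) (K.inner x y),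
    AEEqFun.coeFn_mul (conjL c₁) (K.inner y x), AEEqFun.coeFn_mul (conjL c₂) (K.inner y y),
    conjL_coe c₁, conjL_coe c₂] with ω h₁ h₂ h₃ h₄ h₅ h₆ h₇ h₈ h₉ h₁₀ h₁₁ h₁₂ h₁₃ h₁₄
  rw [h₂, h₃] at h₁
  simpa only [h₄, h₅, h₆, h₇, h₈, h₉, h₁₀, h₁₁, h₁₂, h₁₃, h₁₄, Pi.add_apply, Pi.mul_apply,
    Pi.zero_apply] using h₁

lemma absL_inner_le (x y : X) : absL (K.inner x y) ≤ K.knorm x * K.knorm y := by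
  rw [← AEEqFun.coeFn_le]
  filter_upwards [K.re_inner_combination_nonneg (K.inner y y) (-K.inner x y) x y,
    K.re_inner_combination_nonneg (-K.inner y x) (K.inner x x) x y,
    K.re_inner_combination_nonneg 1 (-K.inner x y) x y,
    AEEqFun.coeFn_neg (K.inner x y), AEEqFun.coeFn_neg (K.inner y x),
    AEEqFun.coeFn_one (β := ℂ) (μ := μ),
    K.inner_self_coe x, K.inner_self_coe y, K.inner_swap_coe x y,
    AEEqFun.coeFn_le.2 (K.self_nonneg x), AEEqFun.coeFn_le.2 (K.self_nonneg y),
    AEEqFun.coeFn_zero (β := ℝ) (μ := μ), absL_coe (K.inner x y), K.knorm_coe x, K.knorm_coe y,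
    AEEqFun.coeFn_mul (K.knorm x) (K.knorm y)]
    with ω h₁ h₂ h₃ hn₁ hn₂ hone hx hy hyx hA hB h0 habs hkx hky hmul
  rw [habs, hmul, Pi.mul_apply, hkx, hky]
  rw [h0, Pi.zero_apply] at hA hB
  simp only [hn₁, hn₂, hone, hx, hy, hyx, Pi.neg_apply, Pi.one_apply] at h₁ h₂ h₃
  generalize K.inner x y ω = t at *
  generalize (reL (K.inner x x)) ω = A at *
  generalize (reL (K.inner y y)) ω = B at *
  simp only [map_neg, map_one, Complex.conj_ofReal, Complex.conj_conj, Complex.add_re,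
    Complex.add_im, Complex.mul_re, Complex.mul_im, Complex.neg_re, Complex.neg_im,
    Complex.conj_re, Complex.conj_im, Complex.ofReal_re, Complex.ofReal_im, Complex.one_re,
    Complex.one_im] at h₁ h₂ h₃
  apply norm_le_sqrt_mul_sqrt_of_combinations_nonneg hA hB <;>
    simp only [Complex.normSq_apply] <;> linarith

lemma absL_inner_le_mul_knorm {x : X} {b : L0R Ω μ}
    (hx : K.knorm x ≤ b) (z : X) : absL (K.inner x z) ≤ K.knorm z * b := by
  refine (K.absL_inner_le x z).trans ?_
  rw [mul_comm]
  exact L0R.mul_le_mul_of_nonneg_left hx (K.knorm_nonneg z)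

end KHInner

section LPlus

variable {X : Type*} [AddCommGroup X] [Module (L0 Ω μ) X] {K : KHInner Ω μ X}
  {D : Submodule (L0 Ω μ) X}

lemma mem_lPlus {a : D →ₗ[L0 Ω μ] X} (hmaps : MapsD D a)
    (hadj : ∀ ψ ∈ D, ∃ χ ∈ D, IsAdjAt K D a ψ χ) : a ∈ LPlus K D :=
  ⟨hmaps, fun ψ hψ => (hadj ψ hψ).imp fun _ h => h.2, hadj⟩

lemma IsAdjAt.unique {a : D →ₗ[L0 Ω μ] X} {ψ χ χ' : X} (h : IsAdjAt K D a ψ χ)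
    (h' : IsAdjAt K D a ψ χ') (hχ : χ ∈ D) (hχ' : χ' ∈ D) : χ = χ' := by
  have hperp : ∀ φ : D, K.inner (φ : X) (χ - χ') = 0 := fun φ => by
    rw [K.inner_sub_right, ← h φ, ← h' φ, sub_self]
  exact sub_eq_zero.1 (K.definite _ (hperp ⟨χ - χ', D.sub_mem hχ hχ'⟩))

lemma IsAdjAt.add {a : D →ₗ[L0 Ω μ] X} {ψ ψ' χ χ' : X} (h : IsAdjAt K D a ψ χ)
    (h' : IsAdjAt K D a ψ' χ') : IsAdjAt K D a (ψ + ψ') (χ + χ') := fun φ => by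
  rw [K.inner_add_right, h φ, h' φ, K.inner_add_right]

lemma IsAdjAt.smul {a : D →ₗ[L0 Ω μ] X} {ψ χ : X} (h : IsAdjAt K D a ψ χ) (c : L0 Ω μ) :
    IsAdjAt K D a (c • ψ) (c • χ) := fun φ => by
  rw [K.inner_smul_right, h φ, K.inner_smul_right]

lemma subtype_mem_lPlus : D.subtype ∈ LPlus K D :=
  mem_lPlus (fun φ => φ.2) fun ψ hψ => ⟨ψ, hψ, fun _ => rfl⟩

lemma add_mem_lPlus {a b : D →ₗ[L0 Ω μ] X} (ha : a ∈ LPlus K D) (hb : b ∈ LPlus K D) :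
    a + b ∈ LPlus K D := by
  refine mem_lPlus (fun φ => D.add_mem (ha.1 φ) (hb.1 φ)) fun ψ hψ => ?_
  obtain ⟨χa, hχa, hadja⟩ := ha.2.2 ψ hψ
  obtain ⟨χb, hχb, hadjb⟩ := hb.2.2 ψ hψ
  refine ⟨χa + χb, D.add_mem hχa hχb, fun φ => ?_⟩
  rw [LinearMap.add_apply, K.add_left, hadja φ, hadjb φ, K.inner_add_right]

lemma smul_mem_lPlus {a : D →ₗ[L0 Ω μ] X} (c : L0 Ω μ) (ha : a ∈ LPlus K D) :
    c • a ∈ LPlus K D := by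
  refine mem_lPlus (fun φ => D.smul_mem c (ha.1 φ)) fun ψ hψ => ?_
  obtain ⟨χ, hχ, hadj⟩ := ha.2.2 ψ hψ
  refine ⟨conjL c • χ, D.smul_mem _ hχ, fun φ => ?_⟩
  rw [LinearMap.smul_apply, K.smul_left, hadj φ, K.inner_smul_right, conjL_conjL]

lemma compD_mem_lPlus {a b : D →ₗ[L0 Ω μ] X} (ha : a ∈ LPlus K D) (hb : b ∈ LPlus K D) :
    compD D a b hb.1 ∈ LPlus K D := by
  refine mem_lPlus (fun φ => ha.1 _) fun ψ hψ => ?_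
  obtain ⟨χa, hχa, hadja⟩ := ha.2.2 ψ hψ
  obtain ⟨χb, hχb, hadjb⟩ := hb.2.2 χa hχa
  exact ⟨χb, hχb, fun φ => (hadja _).trans (hadjb φ)⟩

/-- The operator `a⁺ = a*|D`. -/
noncomputable def lPlusAdjoint {a : D →ₗ[L0 Ω μ] X} (ha : a ∈ LPlus K D) :
    D →ₗ[L0 Ω μ] X where
  toFun ψ := (ha.2.2 ψ ψ.2).choose
  map_add' ψ ψ' := by
    obtain ⟨hχ, h⟩ := (ha.2.2 ψ ψ.2).choose_spec
    obtain ⟨hχ', h'⟩ := (ha.2.2 ψ' ψ'.2).choose_spec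
    obtain ⟨hχ'', h''⟩ := (ha.2.2 (ψ + ψ' : D) (ψ + ψ').2).choose_spec
    exact h''.unique (h.add h') hχ'' (D.add_mem hχ hχ')
  map_smul' c ψ := by
    obtain ⟨hχ, h⟩ := (ha.2.2 ψ ψ.2).choose_spec
    obtain ⟨hχ', h'⟩ := (ha.2.2 (c • ψ : D) (c • ψ).2).choose_spec
    exact h'.unique (h.smul c) hχ' (D.smul_mem c hχ)

lemma lPlusAdjoint_mem {a : D →ₗ[L0 Ω μ] X} (ha : a ∈ LPlus K D) (ψ : D) :
    lPlusAdjoint ha ψ ∈ D :=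
  (ha.2.2 ψ ψ.2).choose_spec.1

lemma isAdjAt_lPlusAdjoint {a : D →ₗ[L0 Ω μ] X} (ha : a ∈ LPlus K D) (ψ : D) :
    IsAdjAt K D a ψ (lPlusAdjoint ha ψ) :=
  (ha.2.2 ψ ψ.2).choose_spec.2

lemma lPlusAdjoint_mem_lPlus {a : D →ₗ[L0 Ω μ] X} (ha : a ∈ LPlus K D) :
    lPlusAdjoint ha ∈ LPlus K D := by
  refine mem_lPlus (lPlusAdjoint_mem ha) fun ψ hψ => ⟨a ⟨ψ, hψ⟩, ha.1 _, fun φ => ?_⟩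
  rw [K.conj_symm, ← isAdjAt_lPlusAdjoint ha φ ⟨ψ, hψ⟩, ← K.conj_symm]

lemma inner_eq_zero_of_boConvN {a : D →ₗ[L0 Ω μ] X} (ha : a ∈ LPlus K D) {ι : Type*}
    [SemilatticeSup ι] {f : ι → D} {y : X} (hf : BOConvN K.knorm (fun i => (f i : X)) 0)
    (hay : BOConvN K.knorm (fun i => a (f i)) y) {ψ : X} (hψ : ψ ∈ D) :
    K.inner y ψ = 0 := by
  obtain ⟨e, he, hin, hfe⟩ := hf.exists_bound
  obtain ⟨e', he', hin', hae⟩ := hay.exists_bound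
  obtain ⟨χ, -, hadj⟩ := ha.2.2 ψ hψ
  refine eq_zero_of_absL_nonpos (nonpos_of_forall_le_mul_add_mul he' hin' he hin
    (K.knorm_nonneg ψ) (K.knorm_nonneg χ) fun i => ?_)
  have hsplit : K.inner y ψ = K.inner (y - a (f i)) ψ + K.inner (f i : X) χ := by
    rw [← hadj (f i), ← K.add_left, sub_add_cancel]
  rw [hsplit]
  refine (absL_add_le _ _).trans (L0R.add_le_add ?_ ?_)
  · exact K.absL_inner_le_mul_knorm (K.knorm_sub_comm y _ ▸ hae i) ψ
  · exact K.absL_inner_le_mul_knorm (by simpa only [sub_zero] using hfe i) χ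

lemma eq_zero_of_forall_inner_eq_zero (hD : BODenseN K.knorm (D : Set X)) {y : X}
    (hy : ∀ ψ ∈ D, K.inner y ψ = 0) : y = 0 := by
  obtain ⟨ι, -, hsup, d, hdD, hdy⟩ := hD y
  obtain ⟨e, -, hin, hde⟩ := hdy.exists_bound
  refine K.definite y (eq_zero_of_absL_nonpos (le_of_forall_le_mul_add hin (K.knorm_nonneg y)
    fun j => ?_))
  have hyy : K.inner y y = K.inner y (y - d j) := by
    rw [K.inner_sub_right, hy _ (hdD j), sub_zero]
  rw [hyy, add_zero]
  exact (K.absL_inner_le _ _).trans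
    (L0R.mul_le_mul_of_nonneg_left (K.knorm_sub_comm y _ ▸ hde j) (K.knorm_nonneg y))

lemma boClosableOp_of_mem_lPlus (hD : BODenseN K.knorm (D : Set X)) {a : D →ₗ[L0 Ω μ] X}
    (ha : a ∈ LPlus K D) : BOClosableOp K D a := fun _ _ _ _ _ hf hay =>
  eq_zero_of_forall_inner_eq_zero hD fun _ hψ => inner_eq_zero_of_boConvN ha hf hay hψ

end LPlus

theorem statement5_general {X : Type*} [AddCommGroup X] [Module (L0 Ω μ) X]
    (K : KHInner Ω μ X) (D : Submodule (L0 Ω μ) X)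
    (hD : BODenseN K.knorm (D : Set X)) :
    (D.subtype ∈ LPlus K D) ∧
    (∀ a ∈ LPlus K D, ∀ b ∈ LPlus K D, a + b ∈ LPlus K D) ∧
    (∀ c : L0 Ω μ, ∀ a ∈ LPlus K D, c • a ∈ LPlus K D) ∧
    (∀ a ∈ LPlus K D, ∀ b, ∀ hb : b ∈ LPlus K D, compD D a b hb.1 ∈ LPlus K D) ∧
    (∀ a ∈ LPlus K D, ∃ aplus ∈ LPlus K D, ∀ φ ψ : D,
        K.inner (a φ) (ψ : X) = K.inner (φ : X) (aplus ψ)) ∧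
    (∀ a ∈ LPlus K D, BOClosableOp K D a) :=
  ⟨subtype_mem_lPlus, fun _ ha _ hb => add_mem_lPlus ha hb, fun c _ ha => smul_mem_lPlus c ha,
    fun _ ha _ hb => compD_mem_lPlus ha hb,
    fun _ ha => ⟨lPlusAdjoint ha, lPlusAdjoint_mem_lPlus ha,
      fun φ ψ => isAdjAt_lPlusAdjoint ha ψ φ⟩,
    fun _ ha => boClosableOp_of_mem_lPlus hD ha⟩

/-- `L⁺(D)` is an `O*`-algebra over `L⁰` with domain `D`: it
contains the identity, is closed under addition, `L⁰`-scalar multiplication,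
composition and the involution `a ↦ a⁺ = a*|D`, and each of its elements is
(bo)-closable. -/
theorem statement5 {X : Type*} [AddCommGroup X] [Module (L0 Ω μ) X]
    (K : KHInner Ω μ X) (hK : K.IsKH) (D : Submodule (L0 Ω μ) X)
    (hD : BODenseN K.knorm (D : Set X)) :
    (D.subtype ∈ LPlus K D) ∧
    (∀ a ∈ LPlus K D, ∀ b ∈ LPlus K D, a + b ∈ LPlus K D) ∧
    (∀ c : L0 Ω μ, ∀ a ∈ LPlus K D, c • a ∈ LPlus K D) ∧
    (∀ a ∈ LPlus K D, ∀ b, ∀ hb : b ∈ LPlus K D, compD D a b hb.1 ∈ LPlus K D) ∧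
    (∀ a ∈ LPlus K D, ∃ aplus ∈ LPlus K D, ∀ φ ψ : D,
        K.inner (a φ) (ψ : X) = K.inner (φ : X) (aplus ψ)) ∧
    (∀ a ∈ LPlus K D, BOClosableOp K D a) :=
  statement5_general K D hD

end KHPaper
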